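/- Every joint probability distribution p_{ab} = Tr((P_a ⊗ P_b) ρ) arising from a bipartite mixed state ρ on ℂⁿ ⊗ ℂⁿ and local orthogonal projections P_a, P_b can be reproduced by a mixed state ρ' on ℝ^{2n} ⊗ ℝ^{2n} and local real orthogonal projections P'_a, P'_b: p_{ab} = Tr((P'_a ⊗ P'_b) ρ'), where P'_a, P'_b depend only on P_a, P_b respectively and ρ' depends only on ρ. -/

import Mathlib

/-!
Write `ρ = C Cᴴ`, a mixture of the pure states given by the columns of `C`. Reading such a
column `v` as an `n × n` matrix `M` (Alice's index first), `⟨v, (A ⊗ B) v⟩ = tr (A M Bᵀ Mᴴ)`.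
Realification is multiplicative, turns `ᴴ` into `ᵀ`, and `tr (Φ X) = 2 Re (tr X)`; hence the real
vector `Φ M` satisfies `⟨Φ M, (Φ A ⊗ Φ B̄) Φ M⟩ = tr Φ (A M Bᵀ Mᴴ) = 2 Re ⟨v, (A ⊗ B) v⟩`.
Halving the mixture of the realified columns gives the real state, and no information is lost
in taking real parts because `tr ((Pa ⊗ Pb) ρ)` is real for Hermitian `Pa ⊗ Pb` and `ρ`.
-/

open Matrix Kronecker ComplexOrder

/-- Realification: replace each complex entry `a + b i` by the real `2×2` block
`[[a, -b], [b, a]]`.  The row/column index `(j, s)` corresponds to row `2j + s`. -/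
def Phi {n : ℕ} (A : Matrix (Fin n) (Fin n) ℂ) :
    Matrix (Fin n × Fin 2) (Fin n × Fin 2) ℝ :=
  fun p q => !![(A p.1 q.1).re, -(A p.1 q.1).im;
                (A p.1 q.1).im,  (A p.1 q.1).re] p.2 q.2

namespace Matrix

variable {ι κ μ R 𝕜 : Type*} [Fintype ι] [Fintype κ] [Fintype μ] [RCLike 𝕜]

theorem star_uncurry_dotProduct_kronecker_mulVec [CommSemiring R] [StarRing R]
    (A : Matrix ι ι R) (B : Matrix κ κ R) (M : Matrix ι κ R) :
    star (fun p : ι × κ => M p.1 p.2) ⬝ᵥ (A ⊗ₖ B) *ᵥ (fun p => M p.1 p.2) =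
      (A * M * Bᵀ * Mᴴ).trace := by
  rw [show (fun p : ι × κ => M p.1 p.2) = vec Mᵀ from rfl, kronecker_mulVec_vec,
    star_vec_dotProduct_vec, ← trace_transpose]
  simp only [transpose_mul, transpose_transpose, conjTranspose_transpose, Matrix.mul_assoc]
  rfl

theorem trace_mul_mul_conjTranspose [CommSemiring R] [StarRing R]
    (K : Matrix ι ι R) (C : Matrix ι μ R) :
    (K * (C * Cᴴ)).trace = ∑ m, star (Cᵀ m) ⬝ᵥ K *ᵥ Cᵀ m := by
  rw [← Matrix.mul_assoc, trace_mul_comm]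
  simp [trace, mul_apply, mulVec, dotProduct]

omit [Fintype ι] [Fintype κ] in
theorem IsHermitian.kronecker [CommMagma R] [StarMul R] {A : Matrix ι ι R} {B : Matrix κ κ R}
    (hA : A.IsHermitian) (hB : B.IsHermitian) : (A ⊗ₖ B).IsHermitian := by
  rw [IsHermitian, conjTranspose_kronecker, hA.eq, hB.eq]

theorem IsHermitian.coe_re_trace_mul {K ρ : Matrix ι ι 𝕜} (hK : K.IsHermitian)
    (hρ : ρ.IsHermitian) : (RCLike.re (K * ρ).trace : 𝕜) = (K * ρ).trace := by
  rw [← RCLike.conj_eq_iff_re, starRingEnd_apply, ← trace_conjTranspose, conjTranspose_mul,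
    hK.eq, hρ.eq, trace_mul_comm]

open scoped MatrixOrder in
theorem PosSemidef.exists_eq_mul_conjTranspose {ρ : Matrix ι ι 𝕜} (hρ : ρ.PosSemidef) :
    ∃ C : Matrix ι ι 𝕜, ρ = C * Cᴴ := by
  classical
  obtain ⟨B, hB⟩ := CStarAlgebra.nonneg_iff_eq_star_mul_self.mp hρ.nonneg
  exact ⟨Bᴴ, by rw [hB, conjTranspose_conjTranspose, star_eq_conjTranspose]⟩

theorem IsStarProjection.map_star [CommSemiring R] [StarRing R] {P : Matrix ι ι R}
    (hP : IsStarProjection P) : IsStarProjection (P.map star) := by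
  constructor
  · show P.map (starRingEnd R) * P.map (starRingEnd R) = P.map (starRingEnd R)
    rw [← Matrix.map_mul, hP.isIdempotentElem.eq]
  · rw [IsSelfAdjoint]
    nth_rewrite 1 [← hP.isSelfAdjoint.star_eq]
    ext i j
    simp

theorem isStarProjection_iff_of_trivialStar [Semiring R] [StarRing R] [TrivialStar R]
    {P : Matrix ι ι R} : IsStarProjection P ↔ P * P = P ∧ Pᵀ = P := by
  rw [isStarProjection_iff', star_eq_conjTranspose, conjTranspose_eq_transpose_of_trivial]

end Matrix

section Realification

variable {n : ℕ}

theorem Phi_eq_compRingEquiv (A : Matrix (Fin n) (Fin n) ℂ) :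
    Phi A = compRingEquiv (Fin n) (Fin 2) ℝ
      ((Algebra.leftMulMatrix Complex.basisOneI).mapMatrix A) := by
  ext p q
  simp [Phi, Algebra.leftMulMatrix_complex]

theorem Phi_mul (A B : Matrix (Fin n) (Fin n) ℂ) : Phi (A * B) = Phi A * Phi B := by
  simp only [Phi_eq_compRingEquiv, map_mul]

theorem Phi_one : Phi (1 : Matrix (Fin n) (Fin n) ℂ) = 1 := by
  simp only [Phi_eq_compRingEquiv, map_one]

theorem transpose_Phi (A : Matrix (Fin n) (Fin n) ℂ) : (Phi A)ᵀ = Phi Aᴴ := by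
  ext ⟨i, s⟩ ⟨j, t⟩
  fin_cases s <;> fin_cases t <;> simp [Phi]

theorem transpose_Phi_map_star (B : Matrix (Fin n) (Fin n) ℂ) :
    (Phi (B.map star))ᵀ = Phi Bᵀ := by
  rw [transpose_Phi]
  congr 1
  ext i j
  simp

theorem trace_Phi (A : Matrix (Fin n) (Fin n) ℂ) : (Phi A).trace = 2 * A.trace.re := by
  simp [trace, Fintype.sum_prod_type, Phi, Complex.re_sum, Finset.mul_sum, two_mul]

theorem IsStarProjection.Phi {P : Matrix (Fin n) (Fin n) ℂ} (hP : IsStarProjection P) :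
    IsStarProjection (Phi P) where
  isIdempotentElem := by rw [IsIdempotentElem, ← Phi_mul, hP.isIdempotentElem.eq]
  isSelfAdjoint := by
    rw [IsSelfAdjoint, star_eq_conjTranspose, conjTranspose_eq_transpose_of_trivial, transpose_Phi,
      ← star_eq_conjTranspose, hP.isSelfAdjoint.star_eq]

theorem star_Phi_dotProduct_kronecker_mulVec (A B M : Matrix (Fin n) (Fin n) ℂ) :
    star (fun P : (Fin n × Fin 2) × (Fin n × Fin 2) => Phi M P.1 P.2) ⬝ᵥ
        (Phi A ⊗ₖ Phi (B.map star)) *ᵥ (fun P => Phi M P.1 P.2) =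
      2 * (star (fun p : Fin n × Fin n => M p.1 p.2) ⬝ᵥ (A ⊗ₖ B) *ᵥ (fun p => M p.1 p.2)).re := by
  rw [star_uncurry_dotProduct_kronecker_mulVec, star_uncurry_dotProduct_kronecker_mulVec,
    conjTranspose_eq_transpose_of_trivial, transpose_Phi_map_star, transpose_Phi, ← Phi_mul,
    ← Phi_mul, ← Phi_mul, trace_Phi]

end Realification

section RealPurification

variable {n : ℕ} {μ : Type*} [Fintype μ]

/-- Column `m` is `Φ` of column `m` of `C` read as an `n × n` matrix; the paper's factor `1/√2`
is put on the state built from it instead. -/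
def realPurification (C : Matrix (Fin n × Fin n) μ ℂ) :
    Matrix ((Fin n × Fin 2) × (Fin n × Fin 2)) μ ℝ :=
  of fun P m => Phi (of fun i k => C (i, k) m) P.1 P.2

theorem trace_Phi_kronecker_mul_realPurification (A B : Matrix (Fin n) (Fin n) ℂ)
    (C : Matrix (Fin n × Fin n) μ ℂ) :
    ((Phi A ⊗ₖ Phi (B.map star)) * (realPurification C * (realPurification C)ᴴ)).trace =
      2 * ((A ⊗ₖ B) * (C * Cᴴ)).trace.re := by
  rw [trace_mul_mul_conjTranspose, trace_mul_mul_conjTranspose, Complex.re_sum, Finset.mul_sum]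
  exact Finset.sum_congr rfl fun m _ => star_Phi_dotProduct_kronecker_mulVec A B _

theorem trace_realPurification_mul_conjTranspose (C : Matrix (Fin n × Fin n) μ ℂ) :
    (realPurification C * (realPurification C)ᴴ).trace = 2 * (C * Cᴴ).trace.re := by
  simpa [Phi_one] using trace_Phi_kronecker_mul_realPurification 1 1 C

end RealPurification

/-- Every bipartite joint probability distribution arising from a mixed state and local
orthogonal projections on `ℂⁿ ⊗ ℂⁿ` can be reproduced by a mixed state and local
orthogonal projections on `ℝ^{2n} ⊗ ℝ^{2n}`, with the real projections depending only on
the corresponding complex projections and the real state depending only on the complex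
state. -/
theorem real_reproduces_complex_joint_probabilities (n : ℕ)
    (ρ : Matrix (Fin n × Fin n) (Fin n × Fin n) ℂ)
    (hρ : ρ.PosSemidef) (hρtr : ρ.trace = 1) :
    ∃ (ρ' : Matrix ((Fin n × Fin 2) × (Fin n × Fin 2)) ((Fin n × Fin 2) × (Fin n × Fin 2)) ℝ)
      (F G : Matrix (Fin n) (Fin n) ℂ → Matrix (Fin n × Fin 2) (Fin n × Fin 2) ℝ),
      ρ'.PosSemidef ∧ ρ'.trace = 1 ∧
      ∀ Pa Pb : Matrix (Fin n) (Fin n) ℂ,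
        Pa * Pa = Pa → Paᴴ = Pa → Pb * Pb = Pb → Pbᴴ = Pb →
        (F Pa * F Pa = F Pa ∧ (F Pa)ᵀ = F Pa) ∧
        (G Pb * G Pb = G Pb ∧ (G Pb)ᵀ = G Pb) ∧
        ((Pa ⊗ₖ Pb) * ρ).trace = ((((F Pa) ⊗ₖ (G Pb)) * ρ').trace : ℝ) := by
  obtain ⟨C, rfl⟩ := hρ.exists_eq_mul_conjTranspose
  set R := realPurification C
  refine ⟨(2⁻¹ : ℝ) • (R * Rᴴ), Phi, fun P => Phi (P.map star),
    (posSemidef_self_mul_conjTranspose R).smul (by norm_num), ?_, ?_⟩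
  · rw [trace_smul, trace_realPurification_mul_conjTranspose, hρtr]
    norm_num
  · intro Pa Pb hPa_idem hPa_herm hPb_idem hPb_herm
    have hPa : IsStarProjection Pa := isStarProjection_iff'.mpr ⟨hPa_idem, hPa_herm⟩
    have hPb : IsStarProjection Pb := isStarProjection_iff'.mpr ⟨hPb_idem, hPb_herm⟩
    refine ⟨isStarProjection_iff_of_trivialStar.mp hPa.Phi,
      isStarProjection_iff_of_trivialStar.mp hPb.map_star.Phi, ?_⟩
    rw [Matrix.mul_smul, trace_smul, trace_Phi_kronecker_mul_realPurification, smul_eq_mul,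
      inv_mul_cancel_left₀ two_ne_zero]
    exact ((IsHermitian.kronecker hPa_herm hPb_herm).coe_re_trace_mul hρ.isHermitian).symm
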